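/- For the Erdős–Rényi random graph G(n,p) with fixed m >= 1, as n -> infinity with np -> c for a constant c > 0, the variance of the number of (m+1)-stars satisfies Var[S_{m+1,n}] / n -> c^{2m-1}/((m-1)!)^2 + sum_{s=1}^{m} c^{2m-s}/(s! ((m-s)!)^2). -/

import Mathlib

open MeasureTheory ProbabilityTheory Finset Filter

/-- The number of `(m+1)`-stars in a graph on `Fin n` with edge indicators `X`. -/
def starCount (n m : ℕ) {Ω : Type*} (X : Fin n → Fin n → Ω → ℝ) (ω : Ω) : ℝ :=
  ∑ i, ∑ A ∈ (Finset.univ.erase i).powersetCard m, ∏ j ∈ A, X i j ω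

/-!
Write `S = ∑ᵢ Tᵢ`, where `Tᵢ` counts the stars with centre `i`. The edge indicators are
idempotent and independent, so a product of them has expectation `p ^ (number of distinct edges)`.
Two stars with the same centre share `#(A ∩ A')` edges; two stars with different centres `i, i'`
share at most the edge `{i, i'}`. Counting these overlaps gives exactly
`Var S = n Var T₁ + n (n - 1) Cov(T₁, T₂)`. Since `C(n - a, k) ~ nᵏ / k!` and `n p → c`,
`Var T₁` tends to `∑_{s=1}^m c^(2m-s) / (s! ((m-s)!)²)` and `(n - 1) Cov(T₁, T₂)` tends to
`c^(2m-1) / ((m-1)!)²`.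
-/

section Counting

variable {α : Type*} [DecidableEq α]

theorem Finset.card_powersetCard_filter_card_inter {A U : Finset α} (hAU : A ⊆ U) {m s : ℕ}
    (hs : s ≤ m) :
    #{B ∈ U.powersetCard m | #(A ∩ B) = s} = (#A).choose s * (#U - #A).choose (m - s) := by
  rw [← card_sdiff_of_subset hAU, ← card_powersetCard, ← card_powersetCard, ← card_product]
  refine card_nbij' (fun B => (A ∩ B, B \ A)) (fun C => C.1 ∪ C.2) ?_ ?_ ?_ ?_
  · intro B hB
    simp only [coe_filter, mem_powersetCard, Set.mem_ofPred_eq] at hB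
    simp only [coe_product, Set.mem_prod, mem_coe, mem_powersetCard]
    exact ⟨⟨inter_subset_left, hB.2⟩, sdiff_subset_sdiff hB.1.1 le_rfl,
      by rw [card_sdiff, hB.1.2, hB.2]⟩
  · rintro ⟨C, D⟩ hCD
    simp only [coe_product, Set.mem_prod, mem_coe, mem_powersetCard] at hCD
    obtain ⟨⟨hCA, hC⟩, hDU, hD⟩ := hCD
    have hAD : Disjoint A D := disjoint_of_subset_right hDU disjoint_sdiff
    simp only [coe_filter, mem_powersetCard, Set.mem_ofPred_eq]
    refine ⟨⟨union_subset (hCA.trans hAU) (hDU.trans sdiff_subset), ?_⟩, ?_⟩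
    · rw [card_union_of_disjoint (disjoint_of_subset_left hCA hAD)]
      omega
    · rw [inter_union_distrib_left, inter_eq_right.2 hCA, disjoint_iff_inter_eq_empty.1 hAD,
        union_empty, hC]
  · intro B _
    dsimp only
    rw [inter_comm]
    exact sup_inf_sdiff B A
  · rintro ⟨C, D⟩ hCD
    simp only [coe_product, Set.mem_prod, mem_coe, mem_powersetCard] at hCD
    obtain ⟨⟨hCA, -⟩, hDU, -⟩ := hCD
    have hAD : Disjoint A D := disjoint_of_subset_right hDU disjoint_sdiff
    refine Prod.ext ?_ ?_ <;> dsimp only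
    · rw [inter_union_distrib_left, inter_eq_right.2 hCA, disjoint_iff_inter_eq_empty.1 hAD,
        union_empty]
    · rw [union_sdiff_distrib, sdiff_eq_empty_iff_subset.2 hCA, empty_union,
        sdiff_eq_self_of_disjoint hAD.symm]

theorem Finset.sum_powersetCard_card_inter {M : Type*} [AddCommMonoid M] {A U : Finset α}
    (hAU : A ⊆ U) (m : ℕ) (f : ℕ → M) :
    ∑ B ∈ U.powersetCard m, f #(A ∩ B) =
      ∑ s ∈ Icc 0 m, ((#A).choose s * (#U - #A).choose (m - s)) • f s := by
  have hmaps : ∀ B ∈ U.powersetCard m, #(A ∩ B) ∈ Icc 0 m := fun B hB => by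
    simpa [← (mem_powersetCard.1 hB).2] using card_le_card inter_subset_right
  rw [← sum_fiberwise_of_maps_to hmaps]
  refine sum_congr rfl fun s hs => ?_
  rw [sum_congr rfl fun B hB => congrArg f (mem_filter.1 hB).2, sum_const,
    card_powersetCard_filter_card_inter hAU (mem_Icc.1 hs).2]

theorem Finset.card_powersetCard_filter_mem {U : Finset α} {x : α} (hx : x ∈ U) {m : ℕ}
    (hm : 1 ≤ m) : #{A ∈ U.powersetCard m | x ∈ A} = (#U - 1).choose (m - 1) := by
  simpa using card_filter_powersetCard_subset {x} U m (singleton_subset_iff.2 hx) (by simpa)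

theorem Finset.notMem_and_card_eq_of_mem_powersetCard_erase {s A : Finset α} {i : α} {m : ℕ}
    (hA : A ∈ (s.erase i).powersetCard m) : i ∉ A ∧ #A = m := by
  rw [mem_powersetCard] at hA
  exact ⟨fun h => (mem_erase.1 (hA.1 h)).1 rfl, hA.2⟩

theorem Fin.card_erase_univ {n : ℕ} (i : Fin n) : #(univ.erase i) = n - 1 := by
  rw [card_erase_of_mem (mem_univ i), card_univ, Fintype.card_fin]

end Counting

theorem Finset.prod_mul_prod_eq_prod_union_of_isIdempotentElem {ι M : Type*} [CommMonoid M]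
    [DecidableEq ι] {f : ι → M} (hf : ∀ i, IsIdempotentElem (f i)) (s t : Finset ι) :
    (∏ i ∈ s, f i) * ∏ i ∈ t, f i = ∏ i ∈ s ∪ t, f i := by
  have hsub : s ∩ t ⊆ s ∪ t := inter_subset_left.trans subset_union_left
  have hidem : IsIdempotentElem (∏ i ∈ s ∩ t, f i) :=
    prod_induction _ _ (fun _ _ => IsIdempotentElem.mul) .one fun i _ => hf i
  rw [← prod_union_inter, ← prod_sdiff hsub, mul_assoc, hidem.eq]

theorem ProbabilityTheory.iIndepFun.integral_finsetProd_eq_prod_integral {Ω ι : Type*}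
    [MeasurableSpace Ω] {μ : Measure Ω} [IsProbabilityMeasure μ] {Z : ι → Ω → ℝ}
    (h : iIndepFun Z μ) (hZ : ∀ i, AEStronglyMeasurable (Z i) μ) (s : Finset ι) :
    ∫ ω, ∏ i ∈ s, Z i ω ∂μ = ∏ i ∈ s, ∫ ω, Z i ω ∂μ := by
  have := (h.precomp Subtype.val_injective).integral_fun_prod_eq_prod_integral fun i : s => hZ i
  simp only [← prod_coe_sort s]
  exact this

section StarEdges

variable {n : ℕ}

def starEdges (i : Fin n) (A : Finset (Fin n)) : Finset (Sym2 (Fin n)) :=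
  A.image fun j => s(i, j)

theorem card_starEdges (i : Fin n) (A : Finset (Fin n)) : #(starEdges i A) = #A :=
  card_image_of_injective _ fun _ _ => Sym2.congr_right.1

theorem starEdges_union (i : Fin n) (A A' : Finset (Fin n)) :
    starEdges i A ∪ starEdges i A' = starEdges i (A ∪ A') :=
  (image_union _ _).symm

theorem not_isDiag_of_mem_starEdges {i : Fin n} {A : Finset (Fin n)} (hA : i ∉ A)
    {z : Sym2 (Fin n)} (hz : z ∈ starEdges i A) : ¬z.IsDiag := by
  obtain ⟨j, hj, rfl⟩ := mem_image.1 hz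
  rw [Sym2.mk_isDiag_iff]
  rintro rfl
  exact hA hj

theorem starEdges_inter_of_ne {i i' : Fin n} (h : i ≠ i') {A A' : Finset (Fin n)} :
    starEdges i A ∩ starEdges i' A' = if i' ∈ A ∧ i ∈ A' then {s(i, i')} else ∅ := by
  ext z
  simp only [starEdges, mem_inter, mem_image]
  split_ifs with hc
  · rw [mem_singleton]
    constructor
    · rintro ⟨⟨j, -, rfl⟩, j', -, hj'⟩
      rw [Sym2.eq_iff] at hj'
      grind [Sym2.eq_swap]
    · rintro rfl
      exact ⟨⟨i', hc.1, rfl⟩, i, hc.2, Sym2.eq_swap⟩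
  · simp only [notMem_empty, iff_false, not_and, not_exists]
    rintro ⟨j, hj, rfl⟩ j' hj' h'
    rw [Sym2.eq_iff] at h'
    grind

end StarEdges

structure IsErdosRenyi {n : ℕ} {Ω : Type*} [MeasurableSpace Ω] (X : Fin n → Fin n → Ω → ℝ)
    (p : ℝ) (μ : Measure Ω) : Prop where
  measurable : ∀ i j, Measurable (X i j)
  symm : ∀ i j, X i j = X j i
  eq_zero_or_one : ∀ i j ω, X i j ω = 0 ∨ X i j ω = 1
  measure_eq_one : ∀ i j, i ≠ j → μ {ω | X i j ω = 1} = ENNReal.ofReal p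
  nonneg : 0 ≤ p
  iIndepFun : iIndepFun (fun q : {q : Fin n × Fin n // q.1 < q.2} => X q.1.1 q.1.2) μ

namespace IsErdosRenyi

variable {n : ℕ} {Ω : Type*} [MeasurableSpace Ω] {X : Fin n → Fin n → Ω → ℝ} {p : ℝ}
  {μ : Measure Ω}

theorem apply_inf_sup (hX : IsErdosRenyi X p μ) (a b : Fin n) :
    X s(a, b).inf s(a, b).sup = X a b := by
  rcases le_total a b with h | h
  · simp [h]
  · simp [h, hX.symm a b]

theorem isIdempotentElem (hX : IsErdosRenyi X p μ) (i j : Fin n) (ω : Ω) :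
    IsIdempotentElem (X i j ω) := by
  rcases hX.eq_zero_or_one i j ω with h | h <;> rw [h]
  exacts [.zero, .one]

theorem norm_prod_le_one (hX : IsErdosRenyi X p μ) (i : Fin n) (A : Finset (Fin n)) (ω : Ω) :
    ‖∏ j ∈ A, X i j ω‖ ≤ 1 := by
  rw [norm_prod]
  refine prod_le_one (fun _ _ => norm_nonneg _) fun j _ => ?_
  rcases hX.eq_zero_or_one i j ω with h | h <;> simp [h]

theorem integral_eq (hX : IsErdosRenyi X p μ) {a b : Fin n} (hab : a ≠ b) :
    ∫ ω, X a b ω ∂μ = p := by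
  have hind : X a b = {ω | X a b ω = 1}.indicator 1 := by
    ext ω
    rcases hX.eq_zero_or_one a b ω with h | h <;> simp [h]
  rw [hind, integral_indicator_one (s := {ω | X a b ω = 1})
      (hX.measurable a b (measurableSet_singleton 1)),
    measureReal_def, hX.measure_eq_one a b hab, ENNReal.toReal_ofReal hX.nonneg]

theorem prod_starEdges (hX : IsErdosRenyi X p μ) (i : Fin n) (A : Finset (Fin n)) (ω : Ω) :
    ∏ z ∈ starEdges i A, X z.inf z.sup ω = ∏ j ∈ A, X i j ω := by
  rw [starEdges, prod_image fun _ _ _ _ => Sym2.congr_right.1]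
  simp only [hX.apply_inf_sup]

theorem integrable_prod [IsFiniteMeasure μ] (hX : IsErdosRenyi X p μ) (i : Fin n)
    (A : Finset (Fin n)) : Integrable (fun ω => ∏ j ∈ A, X i j ω) μ :=
  .of_bound (measurable_prod A fun j _ => hX.measurable i j).aestronglyMeasurable 1
    (ae_of_all _ (hX.norm_prod_le_one i A))

theorem integrable_prod_mul_prod [IsFiniteMeasure μ] (hX : IsErdosRenyi X p μ) (i i' : Fin n)
    (A A' : Finset (Fin n)) :
    Integrable (fun ω => (∏ j ∈ A, X i j ω) * ∏ j ∈ A', X i' j ω) μ :=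
  .of_bound ((measurable_prod A fun j _ => hX.measurable i j).mul
    (measurable_prod A' fun j _ => hX.measurable i' j)).aestronglyMeasurable 1
    (ae_of_all _ fun ω => by
      rw [norm_mul]
      exact mul_le_one₀ (hX.norm_prod_le_one i A ω) (norm_nonneg _) (hX.norm_prod_le_one i' A' ω))

variable [IsProbabilityMeasure μ]

theorem integral_prod_edges (hX : IsErdosRenyi X p μ) (E : Finset (Sym2 (Fin n)))
    (hE : ∀ z ∈ E, ¬z.IsDiag) : ∫ ω, ∏ z ∈ E, X z.inf z.sup ω ∂μ = p ^ #E := by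
  let g : {q : Fin n × Fin n // q.1 < q.2} → Sym2 (Fin n) := fun q => s(q.1.1, q.1.2)
  have hg : g.Injective := by
    rintro ⟨⟨a, b⟩, hab⟩ ⟨⟨c, d⟩, hcd⟩ h
    simp only [g, Sym2.eq_iff] at h
    grind
  have hEg : (E : Set (Sym2 (Fin n))) ⊆ g '' Set.univ := by
    intro z hz
    induction z using Sym2.ind with | _ a b => ?_
    have hab : a ≠ b := by simpa using hE _ hz
    rcases hab.lt_or_gt with h | h
    · exact ⟨⟨(a, b), h⟩, trivial, rfl⟩
    · exact ⟨⟨(b, a), h⟩, trivial, Sym2.eq_swap⟩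
  obtain ⟨F, -, rfl⟩ := subset_set_image_iff.1 hEg
  simp only [prod_image hg.injOn, g, hX.apply_inf_sup]
  rw [hX.iIndepFun.integral_finsetProd_eq_prod_integral
      fun q => (hX.measurable _ _).aestronglyMeasurable,
    prod_congr rfl fun q _ => hX.integral_eq q.2.ne, prod_const, card_image_of_injective _ hg]

theorem integral_prod (hX : IsErdosRenyi X p μ) {i : Fin n} {A : Finset (Fin n)} (hA : i ∉ A) :
    ∫ ω, ∏ j ∈ A, X i j ω ∂μ = p ^ #A := by
  simp only [← hX.prod_starEdges]
  rw [hX.integral_prod_edges _ fun _ => not_isDiag_of_mem_starEdges hA, card_starEdges]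

theorem integral_prod_mul_prod (hX : IsErdosRenyi X p μ) {i i' : Fin n}
    {A A' : Finset (Fin n)} (hA : i ∉ A) (hA' : i' ∉ A') :
    ∫ ω, (∏ j ∈ A, X i j ω) * ∏ j ∈ A', X i' j ω ∂μ =
      p ^ #(starEdges i A ∪ starEdges i' A') := by
  simp only [← hX.prod_starEdges,
    prod_mul_prod_eq_prod_union_of_isIdempotentElem fun z => hX.isIdempotentElem _ _ _]
  refine hX.integral_prod_edges _ fun z hz => ?_
  rcases mem_union.1 hz with hz | hz
  exacts [not_isDiag_of_mem_starEdges hA hz, not_isDiag_of_mem_starEdges hA' hz]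

theorem integral_prod_mul_prod_self (hX : IsErdosRenyi X p μ) {i : Fin n}
    {A A' : Finset (Fin n)} (hA : i ∉ A) (hA' : i ∉ A') :
    ∫ ω, (∏ j ∈ A, X i j ω) * ∏ j ∈ A', X i j ω ∂μ = p ^ #(A ∪ A') := by
  rw [hX.integral_prod_mul_prod hA hA', starEdges_union, card_starEdges]

theorem integral_prod_mul_prod_of_ne (hX : IsErdosRenyi X p μ) {i i' : Fin n} (h : i ≠ i')
    {A A' : Finset (Fin n)} (hA : i ∉ A) (hA' : i' ∉ A') :
    ∫ ω, (∏ j ∈ A, X i j ω) * ∏ j ∈ A', X i' j ω ∂μ =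
      p ^ (#A + #A' - if i' ∈ A ∧ i ∈ A' then 1 else 0) := by
  rw [hX.integral_prod_mul_prod hA hA', card_union, starEdges_inter_of_ne h, card_starEdges,
    card_starEdges, apply_ite card, card_singleton, card_empty]

end IsErdosRenyi

section StarCount

variable {n : ℕ} {Ω : Type*}

def starCountAt (m : ℕ) (X : Fin n → Fin n → Ω → ℝ) (i : Fin n) (ω : Ω) : ℝ :=
  ∑ A ∈ (univ.erase i).powersetCard m, ∏ j ∈ A, X i j ω

theorem starCount_eq_sum_starCountAt (m : ℕ) (X : Fin n → Fin n → Ω → ℝ) (ω : Ω) :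
    starCount n m X ω = ∑ i, starCountAt m X i ω :=
  rfl

def starCountAtVariance (n m : ℕ) (p : ℝ) : ℝ :=
  (n - 1).choose m * ∑ s ∈ Icc 0 m, m.choose s * (n - 1 - m).choose (m - s) * p ^ (2 * m - s) -
    ((n - 1).choose m * p ^ m) ^ 2

def starCountAtCovariance (n m : ℕ) (p : ℝ) : ℝ :=
  (n - 2).choose (m - 1) ^ 2 * (p ^ (2 * m - 1) - p ^ (2 * m))

variable [MeasurableSpace Ω] {X : Fin n → Fin n → Ω → ℝ} {p : ℝ} {μ : Measure Ω}
  [IsProbabilityMeasure μ]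

namespace IsErdosRenyi

theorem integrable_starCountAt (hX : IsErdosRenyi X p μ) (m : ℕ) (i : Fin n) :
    Integrable (starCountAt m X i) μ :=
  integrable_finsetSum _ fun A _ => hX.integrable_prod i A

theorem integral_starCountAt (hX : IsErdosRenyi X p μ) (m : ℕ) (i : Fin n) :
    ∫ ω, starCountAt m X i ω ∂μ = (n - 1).choose m * p ^ m := by
  simp only [starCountAt]
  rw [integral_finsetSum _ fun A _ => hX.integrable_prod i A, sum_congr rfl fun A hA => ?_,
    sum_const, card_powersetCard, Fin.card_erase_univ, nsmul_eq_mul]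
  obtain ⟨hiA, hAm⟩ := notMem_and_card_eq_of_mem_powersetCard_erase hA
  rw [hX.integral_prod hiA, hAm]

theorem integrable_starCountAt_mul (hX : IsErdosRenyi X p μ) (m : ℕ) (i i' : Fin n) :
    Integrable (fun ω => starCountAt m X i ω * starCountAt m X i' ω) μ := by
  simp only [starCountAt, sum_mul_sum]
  exact integrable_finsetSum _ fun A _ => integrable_finsetSum _ fun A' _ =>
    hX.integrable_prod_mul_prod i i' A A'

theorem integral_starCountAt_mul (hX : IsErdosRenyi X p μ) (m : ℕ) (i i' : Fin n) :
    ∫ ω, starCountAt m X i ω * starCountAt m X i' ω ∂μ =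
      ∑ A ∈ (univ.erase i).powersetCard m, ∑ A' ∈ (univ.erase i').powersetCard m,
        ∫ ω, (∏ j ∈ A, X i j ω) * ∏ j ∈ A', X i' j ω ∂μ := by
  simp only [starCountAt, sum_mul_sum]
  rw [integral_finsetSum _ fun A _ => integrable_finsetSum _ fun A' _ =>
    hX.integrable_prod_mul_prod i i' A A']
  exact sum_congr rfl fun A _ =>
    integral_finsetSum _ fun A' _ => hX.integrable_prod_mul_prod i i' A A'

theorem integral_starCountAt_mul_self (hX : IsErdosRenyi X p μ) (m : ℕ) (i : Fin n) :
    ∫ ω, starCountAt m X i ω * starCountAt m X i ω ∂μ =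
      (n - 1).choose m *
        ∑ s ∈ Icc 0 m, m.choose s * (n - 1 - m).choose (m - s) * p ^ (2 * m - s) := by
  rw [hX.integral_starCountAt_mul, sum_congr rfl fun A hA => ?_, sum_const, card_powersetCard,
    Fin.card_erase_univ, nsmul_eq_mul]
  obtain ⟨hiA, hAm⟩ := notMem_and_card_eq_of_mem_powersetCard_erase hA
  have hterm : ∀ A' ∈ (univ.erase i).powersetCard m,
      ∫ ω, (∏ j ∈ A, X i j ω) * ∏ j ∈ A', X i j ω ∂μ = p ^ (2 * m - #(A ∩ A')) :=
    fun A' hA' => by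
      obtain ⟨hiA', hA'm⟩ := notMem_and_card_eq_of_mem_powersetCard_erase hA'
      have := card_union_add_card_inter A A'
      rw [hX.integral_prod_mul_prod_self hiA hiA']
      congr 1
      omega
  rw [sum_congr rfl hterm, sum_powersetCard_card_inter (mem_powersetCard.1 hA).1 m
    fun s => p ^ (2 * m - s), hAm, Fin.card_erase_univ]
  simp only [nsmul_eq_mul, Nat.cast_mul]

theorem integral_starCountAt_mul_of_ne (hX : IsErdosRenyi X p μ) {m : ℕ} (hm : 1 ≤ m)
    {i i' : Fin n} (h : i ≠ i') :
    ∫ ω, starCountAt m X i ω * starCountAt m X i' ω ∂μ =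
      ((n - 1).choose m * p ^ m) ^ 2 + starCountAtCovariance n m p := by
  have hterm : ∀ A ∈ (univ.erase i).powersetCard m, ∀ A' ∈ (univ.erase i').powersetCard m,
      ∫ ω, (∏ j ∈ A, X i j ω) * ∏ j ∈ A', X i' j ω ∂μ =
        p ^ (2 * m) + (if i' ∈ A then 1 else 0) * (if i ∈ A' then 1 else 0) *
          (p ^ (2 * m - 1) - p ^ (2 * m)) := fun A hA A' hA' => by
    obtain ⟨hiA, hAm⟩ := notMem_and_card_eq_of_mem_powersetCard_erase hA
    obtain ⟨hiA', hA'm⟩ := notMem_and_card_eq_of_mem_powersetCard_erase hA'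
    rw [hX.integral_prod_mul_prod_of_ne h hiA hiA', hAm, hA'm, two_mul]
    by_cases h₁ : i' ∈ A <;> by_cases h₂ : i ∈ A' <;> simp [h₁, h₂]
  have hcount : ∀ k k' : Fin n, k ≠ k' →
      ∑ A ∈ (univ.erase k).powersetCard m, (if k' ∈ A then (1 : ℝ) else 0) =
        (n - 2).choose (m - 1) := fun k k' hk => by
    rw [sum_boole, card_powersetCard_filter_mem (mem_erase.2 ⟨hk.symm, mem_univ k'⟩) hm,
      Fin.card_erase_univ, Nat.sub_sub]
  rw [hX.integral_starCountAt_mul, sum_congr rfl fun A hA => sum_congr rfl (hterm A hA)]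
  simp only [sum_add_distrib, sum_const, card_powersetCard, Fin.card_erase_univ, ← sum_mul,
    ← sum_mul_sum, hcount i i' h, hcount i' i h.symm, nsmul_eq_mul, starCountAtCovariance]
  ring

theorem integral_starCount (hX : IsErdosRenyi X p μ) (m : ℕ) :
    ∫ ω, starCount n m X ω ∂μ = n * ((n - 1).choose m * p ^ m) := by
  simp only [starCount_eq_sum_starCountAt]
  rw [integral_finsetSum _ fun i _ => hX.integrable_starCountAt m i]
  simp only [hX.integral_starCountAt, sum_const, card_univ, Fintype.card_fin, nsmul_eq_mul]

theorem integral_starCount_sq (hX : IsErdosRenyi X p μ) {m : ℕ} (hm : 1 ≤ m) :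
    ∫ ω, starCount n m X ω ^ 2 ∂μ =
      n * ((n - 1).choose m *
          ∑ s ∈ Icc 0 m, m.choose s * (n - 1 - m).choose (m - s) * p ^ (2 * m - s)) +
        n * (n - 1 : ℕ) * (((n - 1).choose m * p ^ m) ^ 2 + starCountAtCovariance n m p) := by
  have hsq : ∀ ω, starCount n m X ω ^ 2 =
      ∑ i, ∑ i', starCountAt m X i ω * starCountAt m X i' ω := fun ω => by
    rw [starCount_eq_sum_starCountAt, sq, sum_mul_sum]
  simp only [hsq]
  rw [integral_finsetSum _ fun i _ =>
    integrable_finsetSum _ fun i' _ => hX.integrable_starCountAt_mul m i i']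
  rw [sum_congr rfl fun i _ => by
    rw [integral_finsetSum _ fun i' _ => hX.integrable_starCountAt_mul m i i',
      ← add_sum_erase _ _ (mem_univ i), hX.integral_starCountAt_mul_self,
      sum_congr rfl fun i' hi' => hX.integral_starCountAt_mul_of_ne hm (ne_of_mem_erase hi').symm,
      sum_const, Fin.card_erase_univ, nsmul_eq_mul]]
  simp only [sum_const, card_univ, Fintype.card_fin, nsmul_eq_mul]
  ring

theorem variance_starCount (hX : IsErdosRenyi X p μ) {m : ℕ} (hm : 1 ≤ m) :
    ∫ ω, starCount n m X ω ^ 2 ∂μ - (∫ ω, starCount n m X ω ∂μ) ^ 2 =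
      n * starCountAtVariance n m p + n * (n - 1 : ℕ) * starCountAtCovariance n m p := by
  rw [hX.integral_starCount_sq hm, hX.integral_starCount, starCountAtVariance]
  rcases n with _ | n
  · simp
  · push_cast
    ring

end IsErdosRenyi

end StarCount

section Asymptotics

open Asymptotics Topology

variable {p : ℕ → ℝ} {c : ℝ}

theorem isEquivalent_natCast_sub (a : ℕ) :
    (fun n : ℕ => ((n - a : ℕ) : ℝ)) ~[atTop] fun n => (n : ℝ) := by
  have ho : (fun _ : ℕ => (a : ℝ)) =o[atTop] fun n => (n : ℝ) :=
    isLittleO_const_left.2 <| .inr <| tendsto_norm_atTop_atTop.comp tendsto_natCast_atTop_atTop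
  refine (IsEquivalent.refl.sub_isLittleO ho).congr_left ?_
  filter_upwards [eventually_ge_atTop a] with n hn
  simp [Nat.cast_sub hn]

theorem isEquivalent_choose_sub (a k : ℕ) :
    (fun n : ℕ => ((n - a).choose k : ℝ)) ~[atTop] fun n => (n : ℝ) ^ k / k.factorial :=
  ((isEquivalent_choose k).comp_tendsto (tendsto_sub_atTop_nat a)).trans
    (((isEquivalent_natCast_sub a).pow k).div .refl)

theorem tendsto_choose_sub_mul_pow (a k : ℕ) (hp : Tendsto (fun n : ℕ => n * p n) atTop (𝓝 c)) :
    Tendsto (fun n : ℕ => ((n - a).choose k : ℝ) * p n ^ k) atTop (𝓝 (c ^ k / k.factorial)) := by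
  have h : (fun n : ℕ => ((n - a).choose k : ℝ) * p n ^ k) ~[atTop]
      fun n => (n * p n) ^ k / k.factorial :=
    ((isEquivalent_choose_sub a k).mul .refl).congr_right
      (.of_eq (by ext; rw [Pi.mul_apply]; ring))
  exact h.tendsto_nhds_iff.2 ((hp.pow k).div_const _)

theorem tendsto_starCountAtVariance {m : ℕ} (hp : Tendsto (fun n : ℕ => n * p n) atTop (𝓝 c)) :
    Tendsto (fun n => starCountAtVariance n m (p n)) atTop
      (𝓝 (∑ s ∈ Icc 1 m, c ^ (2 * m - s) / ((s.factorial : ℝ) * ((m - s).factorial : ℝ) ^ 2))) := by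
  have hA := tendsto_choose_sub_mul_pow 1 m hp
  have hB : ∀ s, Tendsto (fun n : ℕ => ((n - 1 - m).choose (m - s) : ℝ) * p n ^ (m - s)) atTop
      (𝓝 (c ^ (m - s) / (m - s).factorial)) := fun s => by
    simpa only [Nat.sub_sub] using tendsto_choose_sub_mul_pow (1 + m) (m - s) hp
  have key := (tendsto_finsetSum (Icc 0 m) fun s _ =>
    (hA.const_mul (m.choose s : ℝ)).mul (hB s)).sub (hA.pow 2)
  convert key using 2 with n
  · rw [starCountAtVariance, mul_sum]
    refine congrArg₂ _ (sum_congr rfl fun s hs => ?_) rfl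
    rw [show 2 * m - s = m + (m - s) by grind, pow_add]
    ring
  · rw [← insert_Icc_add_one_left_eq_Icc (Nat.zero_le m), sum_insert (by simp)]
    simp only [Nat.choose_zero_right, Nat.cast_one, Nat.sub_zero, one_mul, zero_add]
    rw [← sq, add_sub_cancel_left]
    refine sum_congr rfl fun s hs => ?_
    rw [Nat.cast_choose ℝ (mem_Icc.1 hs).2, show 2 * m - s = m + (m - s) by grind, pow_add]
    field_simp

theorem tendsto_natCast_sub_one_mul_starCountAtCovariance {m : ℕ} (hm : 1 ≤ m)
    (hp : Tendsto (fun n : ℕ => n * p n) atTop (𝓝 c)) :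
    Tendsto (fun n => ((n - 1 : ℕ) : ℝ) * starCountAtCovariance n m (p n)) atTop
      (𝓝 (c ^ (2 * m - 1) / ((m - 1).factorial : ℝ) ^ 2)) := by
  obtain ⟨k, rfl⟩ := Nat.exists_eq_add_of_le' hm
  have h1 : Tendsto (fun n : ℕ => ((n - 1 : ℕ) : ℝ) * p n) atTop (𝓝 c) := by
    simpa using tendsto_choose_sub_mul_pow 1 1 hp
  have key := (h1.mul ((tendsto_choose_sub_mul_pow 2 k hp).pow 2)).mul
    (tendsto_const_nhds (x := (1 : ℝ)).sub (tendsto_zero_of_tendsto_mul_atTop hp))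
  simp only [starCountAtCovariance, show 2 * (k + 1) - 1 = 2 * k + 1 by omega, Nat.add_sub_cancel]
  convert key using 2 <;> ring

end Asymptotics

theorem stmt_16_general (m : ℕ) (hm : 1 ≤ m) (c : ℝ)
    (p : ℕ → ℝ) (hp0 : ∀ n, 0 ≤ p n)
    (Ω : ℕ → Type*) [∀ n, MeasurableSpace (Ω n)]
    (μ : (n : ℕ) → Measure (Ω n)) (hprob : ∀ n, IsProbabilityMeasure (μ n))
    (X : (n : ℕ) → Fin n → Fin n → Ω n → ℝ)
    (hmeas : ∀ n i j, Measurable (X n i j))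
    (hsym : ∀ n i j, X n i j = X n j i)
    (h01 : ∀ n i j ω, X n i j ω = 0 ∨ X n i j ω = 1)
    (hbern : ∀ n i j, i ≠ j → μ n {ω | X n i j ω = 1} = ENNReal.ofReal (p n))
    (hindep : ∀ n, iIndepFun
      (fun (q : {q : Fin n × Fin n // q.1 < q.2}) ω => X n q.1.1 q.1.2 ω) (μ n))
    (hlim : Tendsto (fun n : ℕ => (n : ℝ) * p n) atTop (nhds c)) :
    Tendsto (fun n =>
        ((∫ ω, (starCount n m (X n) ω) ^ 2 ∂ μ n) -
          (∫ ω, starCount n m (X n) ω ∂ μ n) ^ 2) / n)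
      atTop
      (nhds (c ^ (2 * m - 1) / ((m - 1).factorial : ℝ) ^ 2 +
        ∑ s ∈ Finset.Icc 1 m,
          c ^ (2 * m - s) / ((s.factorial : ℝ) * ((m - s).factorial : ℝ) ^ 2))) := by
  have hX : ∀ n, IsErdosRenyi (X n) (p n) (μ n) := fun n =>
    ⟨hmeas n, hsym n, h01 n, hbern n, hp0 n, hindep n⟩
  refine ((tendsto_natCast_sub_one_mul_starCountAtCovariance hm hlim).add
    (tendsto_starCountAtVariance hlim)).congr' ?_
  filter_upwards [eventually_ne_atTop 0] with n hn
  have := hprob n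
  rw [(hX n).variance_starCount hm]
  field_simp
  ring

/-- If `n p(n) → c > 0`, then `Var[S_{m+1,n}] / n → c^{2m-1}/((m-1)!)² +
∑_{s=1}^m c^{2m-s}/(s! ((m-s)!)²)` for the Erdős–Rényi graph `G(n, p(n))`. -/
theorem stmt_16 (m : ℕ) (hm : 1 ≤ m) (c : ℝ) (hc : 0 < c)
    (p : ℕ → ℝ) (hp0 : ∀ n, 0 ≤ p n) (hp1 : ∀ n, p n ≤ 1)
    (Ω : ℕ → Type*) [∀ n, MeasurableSpace (Ω n)]
    (μ : (n : ℕ) → Measure (Ω n)) (hprob : ∀ n, IsProbabilityMeasure (μ n))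
    (X : (n : ℕ) → Fin n → Fin n → Ω n → ℝ)
    (hmeas : ∀ n i j, Measurable (X n i j))
    (hsym : ∀ n i j, X n i j = X n j i)
    (hdiag : ∀ n i, X n i i = 0)
    (h01 : ∀ n i j ω, X n i j ω = 0 ∨ X n i j ω = 1)
    (hbern : ∀ n i j, i ≠ j → μ n {ω | X n i j ω = 1} = ENNReal.ofReal (p n))
    (hindep : ∀ n, iIndepFun
      (fun (q : {q : Fin n × Fin n // q.1 < q.2}) ω => X n q.1.1 q.1.2 ω) (μ n))
    (hlim : Tendsto (fun n : ℕ => (n : ℝ) * p n) atTop (nhds c)) :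
    Tendsto (fun n =>
        ((∫ ω, (starCount n m (X n) ω) ^ 2 ∂ μ n) -
          (∫ ω, starCount n m (X n) ω ∂ μ n) ^ 2) / n)
      atTop
      (nhds (c ^ (2 * m - 1) / ((m - 1).factorial : ℝ) ^ 2 +
        ∑ s ∈ Finset.Icc 1 m,
          c ^ (2 * m - s) / ((s.factorial : ℝ) * ((m - s).factorial : ℝ) ^ 2))) :=
  stmt_16_general m hm c p hp0 Ω μ hprob X hmeas hsym h01 hbern hindep hlim
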